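/- arXiv:2512.00751 — 2 statements merged into one kernel-verified Lean document; each statement's English description precedes it below -/
import Mathlib

section
/- Let F, G, H be probability measures on ℝ^d and r > 0. Then the Lévy–Prokhorov distance satisfies π(F, G) ≤ π(F ∗ H, G ∗ H) + 2·max{r, H({x : ‖x‖ ≥ r})}, where ∗ denotes convolution of measures. -/
/-
Smoothing by `H` moves mass by less than `r` except on an event of probability
`β = H {x | r ≤ ‖x‖}`. Hence `F A ≤ (F ∗ H) (A^r) + β`, and in the other direction
`(G ∗ H) B ≤ G (B^r) + β`. Sandwiching an admissible radius `ε` for `(F ∗ H, G ∗ H)`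
between these two estimates gives `F A ≤ G (A^(ε + 2r)) + ε + 2β`, so `ε + 2 max r β`
is admissible for `(F, G)`.
-/

open MeasureTheory Metric

/-- The Lévy–Prokhorov distance between two measures on `ℝ^d`. -/
noncomputable def levyProkhorov {d : ℕ} (F G : Measure (EuclideanSpace ℝ (Fin d))) : ℝ :=
  sInf {ε : ℝ | 0 < ε ∧ ∀ A : Set (EuclideanSpace ℝ (Fin d)), MeasurableSet A →
    F A ≤ G (thickening ε A) + ENNReal.ofReal ε}

/-- The convolution of two measures: the law of `X + Y` for independent `X ∼ F`, `Y ∼ H`. -/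
noncomputable def conv {d : ℕ} (F H : Measure (EuclideanSpace ℝ (Fin d))) :
    Measure (EuclideanSpace ℝ (Fin d)) :=
  (F.prod H).map (fun p => p.1 + p.2)

def LevyProkhorovAdmissible {X : Type*} [PseudoMetricSpace X] [MeasurableSpace X]
    (μ ν : Measure X) (ε : ℝ) : Prop :=
  ∀ A : Set X, MeasurableSet A → μ A ≤ ν (thickening ε A) + ENNReal.ofReal ε

theorem levyProkhorov_le_add {d : ℕ} {F G F' G' : Measure (EuclideanSpace ℝ (Fin d))}
    [IsProbabilityMeasure F'] {c : ℝ} (hc : 0 ≤ c)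
    (h : ∀ ε, 0 < ε → LevyProkhorovAdmissible F' G' ε → LevyProkhorovAdmissible F G (ε + c)) :
    levyProkhorov F G ≤ levyProkhorov F' G' + c := by
  change sInf {ε | 0 < ε ∧ LevyProkhorovAdmissible F G ε} ≤
    sInf {ε | 0 < ε ∧ LevyProkhorovAdmissible F' G' ε} + c
  have hne : {ε | 0 < ε ∧ LevyProkhorovAdmissible F' G' ε}.Nonempty :=
    ⟨1, one_pos, fun A _ => by simpa using prob_le_one.trans le_add_self⟩
  rw [← sub_le_iff_le_add]
  refine le_csInf hne fun ε ⟨hε, hadm⟩ => sub_le_iff_le_add.2 ?_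
  exact csInf_le ⟨0, fun x hx => hx.1.le⟩ ⟨by positivity, h ε hε hadm⟩

section Convolution

variable {E : Type*} [SeminormedAddCommGroup E] [MeasurableSpace E] [MeasurableAdd₂ E]
  {μ ν : Measure E} [IsProbabilityMeasure μ] [IsProbabilityMeasure ν]

theorem measure_le_conv_thickening_add (A : Set E) (r : ℝ) :
    μ A ≤ (μ ∗ ν) (thickening r A) + ν {x | r ≤ ‖x‖} := by
  have hcompl : {x : E | r ≤ ‖x‖} = (ball 0 r)ᶜ := by ext; simp
  have hprod : μ A * ν (ball 0 r) ≤ (μ ∗ ν) (thickening r A) := by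
    rw [← Measure.prod_prod]
    refine (measure_mono ?_).trans (Measure.le_map_apply (by fun_prop) _)
    rintro ⟨a, y⟩ ⟨ha, hy⟩
    exact mem_thickening_iff.2 ⟨a, ha, by simpa [dist_eq_norm] using hy⟩
  calc μ A = μ A * ν Set.univ := by rw [measure_univ, mul_one]
    _ ≤ μ A * ν (ball 0 r) + μ A * ν (ball 0 r)ᶜ := by
        rw [← mul_add]; gcongr; exact measure_univ_le_add_compl _
    _ ≤ (μ ∗ ν) (thickening r A) + ν {x | r ≤ ‖x‖} := by
        rw [hcompl]
        exact add_le_add hprod (mul_le_of_le_one_left' prob_le_one)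

theorem conv_le_measure_thickening_add {B : Set E} (hB : MeasurableSet B) (r : ℝ) :
    (μ ∗ ν) B ≤ μ (thickening r B) + ν {x | r ≤ ‖x‖} := by
  have hsub : (fun p : E × E => p.1 + p.2) ⁻¹' B ⊆
      thickening r B ×ˢ Set.univ ∪ Set.univ ×ˢ {x | r ≤ ‖x‖} := by
    rintro ⟨a, y⟩ hay
    by_cases hy : r ≤ ‖y‖
    · exact Or.inr ⟨trivial, hy⟩
    · refine Or.inl ⟨mem_thickening_iff.2 ⟨a + y, hay, ?_⟩, trivial⟩
      simpa [dist_eq_norm] using not_le.1 hy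
  calc (μ ∗ ν) B = μ.prod ν ((fun p : E × E => p.1 + p.2) ⁻¹' B) :=
        Measure.map_apply (by fun_prop) hB
    _ ≤ μ.prod ν (thickening r B ×ˢ Set.univ) + μ.prod ν (Set.univ ×ˢ {x | r ≤ ‖x‖}) :=
        (measure_mono hsub).trans (measure_union_le _ _)
    _ = μ (thickening r B) + ν {x | r ≤ ‖x‖} := by simp [Measure.prod_prod]

theorem LevyProkhorovAdmissible.of_conv [OpensMeasurableSpace E] {F G H : Measure E}
    [IsProbabilityMeasure F] [IsProbabilityMeasure G] [IsProbabilityMeasure H]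
    {ε : ℝ} (hε : 0 ≤ ε) (r : ℝ)
    (h : LevyProkhorovAdmissible (F ∗ H) (G ∗ H) ε) :
    LevyProkhorovAdmissible F G (ε + 2 * max r (H {x | r ≤ ‖x‖}).toReal) := by
  intro A _
  set β := H {x | r ≤ ‖x‖}
  set c := max r β.toReal
  have hβc : β ≤ ENNReal.ofReal c :=
    (ENNReal.le_ofReal_iff_toReal_le (measure_ne_top _ _) (ENNReal.toReal_nonneg.trans
      (le_max_right _ _))).2 (le_max_right _ _)
  have hc : 0 ≤ c := ENNReal.toReal_nonneg.trans (le_max_right _ _)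
  have hthick : thickening r (thickening ε (thickening r A)) ⊆ thickening (ε + 2 * c) A :=
    (thickening_subset_of_subset r (thickening_thickening_subset ε r A)).trans <|
      (thickening_thickening_subset r (ε + r) A).trans <|
        thickening_mono (by linarith [le_max_left r β.toReal]) A
  calc F A ≤ (F ∗ H) (thickening r A) + β := measure_le_conv_thickening_add A r
    _ ≤ (G ∗ H) (thickening ε (thickening r A)) + ENNReal.ofReal ε + β :=
        add_le_add_left (h _ isOpen_thickening.measurableSet) _
    _ ≤ G (thickening r (thickening ε (thickening r A))) + β + ENNReal.ofReal ε + β := by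
        gcongr; exact conv_le_measure_thickening_add isOpen_thickening.measurableSet r
    _ ≤ G (thickening (ε + 2 * c) A) + ENNReal.ofReal c + ENNReal.ofReal ε +
          ENNReal.ofReal c := by
        gcongr
    _ = G (thickening (ε + 2 * c) A) + ENNReal.ofReal (ε + 2 * c) := by
        rw [ENNReal.ofReal_add hε (by positivity), two_mul, ENNReal.ofReal_add hc hc]; ring

end Convolution

theorem levyProkhorov_le_conv_general {d : ℕ} (F G H : Measure (EuclideanSpace ℝ (Fin d)))
    [IsProbabilityMeasure F] [IsProbabilityMeasure G] [IsProbabilityMeasure H]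
    (r : ℝ) :
    levyProkhorov F G ≤ levyProkhorov (conv F H) (conv G H) +
      2 * max r (H {x | r ≤ ‖x‖}).toReal := by
  -- `conv` unfolds to Mathlib's `Measure.conv`
  change levyProkhorov F G ≤ levyProkhorov (F ∗ H) (G ∗ H) + _
  exact levyProkhorov_le_add (mul_nonneg zero_le_two (ENNReal.toReal_nonneg.trans
    (le_max_right _ _))) fun ε hε h => h.of_conv hε.le r

/-- `π(F, G) ≤ π(F ∗ H, G ∗ H) + 2·max{r, H({x : ‖x‖ ≥ r})}`. -/
theorem levyProkhorov_le_conv {d : ℕ} (F G H : Measure (EuclideanSpace ℝ (Fin d)))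
    [IsProbabilityMeasure F] [IsProbabilityMeasure G] [IsProbabilityMeasure H]
    (r : ℝ) (hr : 0 < r) :
    levyProkhorov F G ≤ levyProkhorov (conv F H) (conv G H) +
      2 * max r (H {x | r ≤ ‖x‖}).toReal :=
  levyProkhorov_le_conv_general F G H r
end

section
/- Let A be an n×n positive semidefinite Hermitian matrix with nonincreasing eigenvalues a_1 ≥ a_2 ≥ … ≥ a_n ≥ 0, effective rank r = Tr(A)²/Tr(A²) (assumed a positive integer), and semi-isotropic replacement à with eigenvalues ã_i = Tr(A)/r for i ≤ r and 0 otherwise. Then Tr(A·Ã) ≥ (Tr(A²)/Tr(A))·(Tr(A) − n·a_{r+1}), and consequently Tr[(A − Ã)²] ≤ 2·(Tr(A²)/Tr(A))·n·a_{r+1}. -/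
/-!
Conjugating by `U` turns both traces into sums over the eigenvalues:
`Tr(AÃ) = (Tr A / r) · ∑_{i ≤ r} aᵢ` and `Tr[(A − Ã)²] = Tr(A²) − 2 Tr(AÃ) + ∑ ãᵢ²`.
Since `r = Tr(A)²/Tr(A²)`, the level `Tr A / r` of `Ã` equals `Tr(A²)/Tr A` and `∑ ãᵢ² ≤ Tr(A²)`.
As `a` is nonincreasing, the discarded tail `∑_{i > r} aᵢ` is at most `n · a_{r+1}`.
-/

open Matrix Finset

namespace Matrix

variable {m R : Type*} [Fintype m] [DecidableEq m] [CommSemiring R] {U V : Matrix m m R}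

lemma conj_mul_conj_of_mul_eq_one (hVU : V * U = 1) (M N : Matrix m m R) :
    (U * M * V) * (U * N * V) = U * (M * N) * V := by
  simp only [Matrix.mul_assoc]
  rw [← Matrix.mul_assoc V, hVU, Matrix.one_mul]

lemma trace_conj_of_mul_eq_one (hVU : V * U = 1) (M : Matrix m m R) :
    (U * M * V).trace = M.trace := by
  rw [trace_mul_cycle, hVU, Matrix.one_mul]

lemma re_trace_conj_diagonal_mul_conj_diagonal {U V : Matrix m m ℂ} (hVU : V * U = 1)
    (x y : m → ℝ) :
    ((U * diagonal (fun i => (x i : ℂ)) * V) * (U * diagonal (fun i => (y i : ℂ)) * V)).trace.re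
      = ∑ i, x i * y i := by
  rw [conj_mul_conj_of_mul_eq_one hVU, trace_conj_of_mul_eq_one hVU, diagonal_mul_diagonal,
    trace_diagonal]
  simp only [Complex.re_sum, ← Complex.ofReal_mul, Complex.ofReal_re]

end Matrix

variable {n : ℕ}

/-- The eigenvalues `ãᵢ` of the semi-isotropic replacement `Ã`. -/
noncomputable def semiIsotropic (a : Fin n → ℝ) (r : ℕ) (i : Fin n) : ℝ :=
  if i.val < r then (∑ j, a j) / r else 0

lemma sum_mul_semiIsotropic (a : Fin n → ℝ) (r : ℕ) :
    ∑ i, a i * semiIsotropic a r i = (∑ j, a j) / r * ∑ i with i.val < r, a i := by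
  rw [sum_filter, mul_sum]
  refine sum_congr rfl fun i _ => ?_
  unfold semiIsotropic
  split_ifs <;> ring

lemma sum_sq_semiIsotropic_le (a : Fin n → ℝ) (r : ℕ) :
    ∑ i, semiIsotropic a r i ^ 2 ≤ (∑ j, a j) ^ 2 / r := by
  have hcard : #{i : Fin n | i.val < r} ≤ r :=
    Fin.card_filter_val_lt.trans_le (min_le_right _ _)
  calc ∑ i, semiIsotropic a r i ^ 2 = #{i : Fin n | i.val < r} * ((∑ j, a j) / r) ^ 2 := by
        simp [semiIsotropic, ite_pow, sum_ite]
    _ ≤ r * ((∑ j, a j) / r) ^ 2 := by gcongr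
    _ = (∑ j, a j) ^ 2 / r := by
        rcases eq_or_ne r 0 with rfl | hr
        · simp
        · field_simp

lemma sum_le_sum_filter_lt_add_mul {a : Fin n → ℝ} (ha : Antitone a) (ha0 : ∀ i, 0 ≤ a i)
    (r : ℕ) :
    ∑ i, a i ≤ ∑ i with i.val < r, a i + n * (if h : r < n then a ⟨r, h⟩ else 0) := by
  set a' := if h : r < n then a ⟨r, h⟩ else 0
  have ha'0 : 0 ≤ a' := by unfold a'; split_ifs <;> simp [ha0]
  have htail : ∀ i : Fin n, ¬ i.val < r → a i ≤ a' := fun i hi => by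
    have hrn : r < n := lt_of_le_of_lt (not_lt.mp hi) i.isLt
    simpa [a', hrn] using ha (Fin.le_def.mpr (not_lt.mp hi))
  rw [← sum_filter_add_sum_filter_not univ (fun i : Fin n => i.val < r)]
  gcongr
  calc ∑ i with ¬ i.val < r, a i ≤ ∑ i with ¬ i.val < r, a' :=
        sum_le_sum fun i hi => htail i (mem_filter.mp hi).2
    _ ≤ ∑ _i : Fin n, a' := sum_le_sum_of_subset_of_nonneg (filter_subset _ _) fun _ _ _ => ha'0
    _ = n * a' := by simp

lemma semiIsotropic_sum_bounds {a : Fin n → ℝ} (ha : Antitone a) (ha0 : ∀ i, 0 ≤ a i)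
    {r : ℕ} (hrpos : 0 < r) (hr : (r : ℝ) = (∑ i, a i) ^ 2 / ∑ i, a i ^ 2)
    {a' : ℝ} (ha' : a' = if h : r < n then a ⟨r, h⟩ else 0) :
    (∑ i, a i ^ 2) / (∑ i, a i) * ((∑ i, a i) - n * a') ≤ ∑ i, a i * semiIsotropic a r i ∧
    ∑ i, (a i - semiIsotropic a r i) ^ 2 ≤ 2 * ((∑ i, a i ^ 2) / (∑ i, a i)) * n * a' := by
  set T := ∑ i, a i
  set S := ∑ i, a i ^ 2
  obtain ⟨hT, hS⟩ : T ≠ 0 ∧ S ≠ 0 := by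
    have : T ^ 2 / S ≠ 0 := hr ▸ Nat.cast_ne_zero.mpr hrpos.ne'
    simpa using this
  have hTr : T / r = S / T := by
    rw [hr]; field_simp
  have hST : 0 ≤ S / T :=
    div_nonneg (sum_nonneg fun i _ => sq_nonneg _) (sum_nonneg fun i _ => ha0 i)
  have hinner : S / T * (T - n * a') ≤ ∑ i, a i * semiIsotropic a r i := by
    rw [sum_mul_semiIsotropic, hTr, ha']
    have := sum_le_sum_filter_lt_add_mul ha ha0 r
    gcongr
    linarith
  refine ⟨hinner, ?_⟩
  have hsq : ∑ i, semiIsotropic a r i ^ 2 ≤ S :=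
    calc _ ≤ T ^ 2 / r := sum_sq_semiIsotropic_le a r
      _ = S := by rw [hr]; field_simp
  have hexpand : ∑ i, (a i - semiIsotropic a r i) ^ 2
      = S - 2 * ∑ i, a i * semiIsotropic a r i + ∑ i, semiIsotropic a r i ^ 2 := by
    simp only [sub_sq, sum_add_distrib, sum_sub_distrib, mul_sum, mul_assoc, S]
  have hcancel : S / T * (T - n * a') = S - S / T * n * a' := by field_simp
  linarith

theorem semi_isotropic_trace_bounds_general {n : ℕ}
    (U : Matrix (Fin n) (Fin n) ℂ) (hU : U ∈ Matrix.unitaryGroup (Fin n) ℂ)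
    (a : Fin n → ℝ) (ha : Antitone a) (ha0 : ∀ i, 0 ≤ a i)
    (r : ℕ) (hrpos : 0 < r)
    (hr : (r : ℝ) = (∑ i, a i) ^ 2 / (∑ i, (a i) ^ 2))
    (A Atil : Matrix (Fin n) (Fin n) ℂ)
    (hA : A = U * Matrix.diagonal (fun i => (a i : ℂ)) * Uᴴ)
    (hAtil : Atil = U * Matrix.diagonal
      (fun i : Fin n => if (i : ℕ) < r then (((∑ j, a j) / r : ℝ) : ℂ) else 0) * Uᴴ)
    (a' : ℝ) (ha' : a' = if h : r < n then a ⟨r, h⟩ else 0) :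
    ((∑ i, (a i) ^ 2) / (∑ i, a i)) * ((∑ i, a i) - n * a') ≤ ((A * Atil).trace).re ∧
    (((A - Atil) * (A - Atil)).trace).re ≤ 2 * ((∑ i, (a i) ^ 2) / (∑ i, a i)) * n * a' := by
  have hUU : Uᴴ * U = 1 := Unitary.star_mul_self_of_mem hU
  have hAtil' : Atil = U * diagonal (fun i => (semiIsotropic a r i : ℂ)) * Uᴴ := by
    simp only [hAtil, semiIsotropic, apply_ite Complex.ofReal, Complex.ofReal_zero]
  have hdiff : A - Atil = U * diagonal (fun i => ((a i - semiIsotropic a r i : ℝ) : ℂ)) * Uᴴ := by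
    rw [hA, hAtil', ← Matrix.sub_mul, ← Matrix.mul_sub, diagonal_sub]
    simp only [Complex.ofReal_sub]
  rw [hdiff, hA, hAtil', re_trace_conj_diagonal_mul_conj_diagonal hUU,
    re_trace_conj_diagonal_mul_conj_diagonal hUU]
  simp only [← sq]
  exact semiIsotropic_sum_bounds ha ha0 hrpos hr ha'

/-- For a PSD matrix `A` with nonincreasing eigenvalues `a`, integer effective rank
`r = Tr(A)²/Tr(A²)`, and semi-isotropic replacement `Atil`:
`Tr(A·Atil) ≥ (Tr(A²)/Tr(A))·(Tr(A) − n·a_{r+1})` and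
`Tr[(A − Atil)²] ≤ 2·(Tr(A²)/Tr(A))·n·a_{r+1}`. -/
theorem semi_isotropic_trace_bounds {n : ℕ}
    (U : Matrix (Fin n) (Fin n) ℂ) (hU : U ∈ Matrix.unitaryGroup (Fin n) ℂ)
    (a : Fin n → ℝ) (ha : Antitone a) (ha0 : ∀ i, 0 ≤ a i) (hane : ∃ i, a i ≠ 0)
    (r : ℕ) (hrpos : 0 < r)
    (hr : (r : ℝ) = (∑ i, a i) ^ 2 / (∑ i, (a i) ^ 2))
    (A Atil : Matrix (Fin n) (Fin n) ℂ)
    (hA : A = U * Matrix.diagonal (fun i => (a i : ℂ)) * Uᴴ)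
    (hAtil : Atil = U * Matrix.diagonal
      (fun i : Fin n => if (i : ℕ) < r then (((∑ j, a j) / r : ℝ) : ℂ) else 0) * Uᴴ)
    (a' : ℝ) (ha' : a' = if h : r < n then a ⟨r, h⟩ else 0) :
    ((∑ i, (a i) ^ 2) / (∑ i, a i)) * ((∑ i, a i) - n * a') ≤ ((A * Atil).trace).re ∧
    (((A - Atil) * (A - Atil)).trace).re ≤ 2 * ((∑ i, (a i) ^ 2) / (∑ i, a i)) * n * a' :=
  semi_isotropic_trace_bounds_general U hU a ha ha0 r hrpos hr A Atil hA hAtil a' ha'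
end
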